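/- The convergent of the continued fraction expansion of C₁₀ truncated immediately before coefficient number 4 (the first high water mark of HWM number 4) is 10/81: the 3rd convergent numerator of GenContFract.of C₁₀ is 10 and the 3rd convergent denominator is 81; moreover its error satisfies 10^(−9) < 10/81 − C₁₀ < 11·10^(−10) (so the error is approximately 1.0·10^(−9) and the convergent exceeds C₁₀). -/

import Mathlib

/-!
The integers `1, …, 12` fill the first fifteen digits `0.123456789101112`, and every later integer
has at least two digits, so the rest of the series is below the geometric series
`10⁻¹⁵ · 100/99`; this pins `C₁₀` inside an interval of width `2 · 10⁻¹⁵`. Every real number in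
`(19/154, 10/81)` has continued fraction `[0; 8, 9, 1, …]`: its complete quotients are the
Möbius transforms `1/x`, `x/(1 - 8x)`, `(1 - 8x)/(73x - 9)`, whose floors are read off from the
endpoints. The continuant recurrences then give the convergent `10/81`, and the error bounds
are decimal arithmetic on the interval for `C₁₀`.
-/

/-- `pos n` is the position in the decimal expansion of Champernowne's constant
of the last digit of the integer `n`. -/
def pos (n : ℕ) : ℕ := ∑ k ∈ Finset.Icc 1 n, (Nat.digits 10 k).length

/-- Champernowne's constant in base ten. -/
noncomputable def C₁₀ : ℝ := ∑' n : ℕ, ((n + 1 : ℕ) : ℝ) / 10 ^ pos (n + 1)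

namespace GenContFract

section Continuants

variable {K : Type*} [DivisionRing K] {g : GenContFract K} {b₀ b₁ b₂ : K}

theorem nums_three_eq (h₀ : g.s.get? 0 = some ⟨1, b₀⟩) (h₁ : g.s.get? 1 = some ⟨1, b₁⟩)
    (h₂ : g.s.get? 2 = some ⟨1, b₂⟩) :
    g.nums 3 = b₂ * (b₁ * (b₀ * g.h + 1) + g.h) + (b₀ * g.h + 1) := by
  have n₁ : g.nums 1 = b₀ * g.h + 1 := first_num_eq h₀
  have n₂ := nums_recurrence (n := 0) h₁ zeroth_num_eq_h n₁
  rw [nums_recurrence (n := 1) h₂ n₁ n₂, one_mul, one_mul]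

theorem dens_three_eq (h₀ : g.s.get? 0 = some ⟨1, b₀⟩) (h₁ : g.s.get? 1 = some ⟨1, b₁⟩)
    (h₂ : g.s.get? 2 = some ⟨1, b₂⟩) :
    g.dens 3 = b₂ * (b₁ * b₀ + 1) + b₀ := by
  have d₁ : g.dens 1 = b₀ := first_den_eq h₀
  have d₂ := dens_recurrence (n := 0) h₁ zeroth_den_eq_one d₁
  rw [dens_recurrence (n := 1) h₂ d₁ d₂, one_mul, one_mul]

end Continuants

section Computation

variable {K : Type*} [Field K] [LinearOrder K] [FloorRing K] {v : K} {a b : ℤ}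

theorem of_s_get?_succ_of_floor_eq [IsStrictOrderedRing K] (ha : ⌊v⌋ = a) (n : ℕ) :
    (GenContFract.of v).s.get? (n + 1) = (GenContFract.of (v - a)⁻¹).s.get? n := by
  rw [of_s_succ, Int.fract, ha]

theorem of_s_get?_zero_of_floor_eq (ha : ⌊v⌋ = a) (hv : v ≠ a) (hb : ⌊(v - a)⁻¹⌋ = b) :
    (GenContFract.of v).s.get? 0 = some ⟨1, b⟩ := by
  have hfract : Int.fract v = v - a := by rw [Int.fract, ha]
  rw [← hb, ← hfract]
  exact of_s_head (hfract ▸ sub_ne_zero.2 hv)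

theorem of_s_of_mem_Ioo [IsStrictOrderedRing K] {x : K} (hx : x ∈ Set.Ioo (19 / 154) (10 / 81)) :
    (GenContFract.of x).h = 0 ∧ (GenContFract.of x).s.get? 0 = some ⟨1, 8⟩ ∧ (GenContFract.of x).s.get? 1 = some ⟨1, 9⟩ ∧
      (GenContFract.of x).s.get? 2 = some ⟨1, 1⟩ := by
  obtain ⟨hlo, hhi⟩ := hx
  have hx₀ : 0 < x := by linarith
  have hx₁ : 0 < 1 - 8 * x := by linarith
  have hx₂ : 0 < 73 * x - 9 := by linarith
  have e₁ : x⁻¹ - (8 : ℤ) = (1 - 8 * x) / x := by field_simp; norm_num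
  have e₂ : ((1 - 8 * x) / x)⁻¹ - (9 : ℤ) = (73 * x - 9) / (1 - 8 * x) := by
    field_simp; push_cast; ring
  have f₀ : ⌊x⌋ = 0 := Int.floor_eq_zero_iff.2 ⟨hx₀.le, by linarith⟩
  have f₁ : ⌊x⁻¹⌋ = 8 := by
    rw [Int.floor_eq_iff, ← one_div, le_div_iff₀ hx₀, div_lt_iff₀ hx₀]
    constructor <;> push_cast <;> linarith
  have f₂ : ⌊((1 - 8 * x) / x)⁻¹⌋ = 9 := by
    rw [Int.floor_eq_iff, inv_div, le_div_iff₀ hx₁, div_lt_iff₀ hx₁]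
    constructor <;> push_cast <;> linarith
  have f₃ : ⌊((73 * x - 9) / (1 - 8 * x))⁻¹⌋ = 1 := by
    rw [Int.floor_eq_iff, inv_div, le_div_iff₀ hx₂, div_lt_iff₀ hx₂]
    constructor <;> push_cast <;> linarith
  have ne₀ : x ≠ ((0 : ℤ) : K) := by simpa using hx₀.ne'
  have ne₁ : x⁻¹ ≠ ((8 : ℤ) : K) := by
    rw [← sub_ne_zero, e₁]; exact (div_pos hx₁ hx₀).ne'
  have ne₂ : ((1 - 8 * x) / x)⁻¹ ≠ ((9 : ℤ) : K) := by
    rw [← sub_ne_zero, e₂]; exact (div_pos hx₂ hx₁).ne'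
  refine ⟨by rw [of_h_eq_floor, f₀, Int.cast_zero], ?_, ?_, ?_⟩
  · exact_mod_cast of_s_get?_zero_of_floor_eq (b := 8) f₀ ne₀ (by simpa using f₁)
  · rw [of_s_get?_succ_of_floor_eq f₀, Int.cast_zero, sub_zero]
    exact_mod_cast of_s_get?_zero_of_floor_eq (b := 9) f₁ ne₁ (by rwa [e₁])
  · rw [of_s_get?_succ_of_floor_eq f₀, Int.cast_zero, sub_zero, of_s_get?_succ_of_floor_eq f₁, e₁]
    exact_mod_cast of_s_get?_zero_of_floor_eq (b := 1) f₂ ne₂ (by rwa [e₂])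

end Computation

end GenContFract

section Champernowne

theorem pos_zero : pos 0 = 0 := rfl

theorem pos_succ (n : ℕ) : pos (n + 1) = pos n + (Nat.digits 10 (n + 1)).length :=
  Finset.sum_Icc_succ_top (Nat.le_add_left 1 n) _

theorem two_le_length_digits_ten {m : ℕ} (hm : 10 ≤ m) : 2 ≤ (Nat.digits 10 m).length := by
  have hlt : m < 10 ^ (Nat.digits 10 m).length := Nat.lt_base_pow_length_digits (by norm_num)
  by_contra! h
  interval_cases hlen : (Nat.digits 10 m).length <;> omega

theorem pos_add_two_mul_le {m : ℕ} (hm : 9 ≤ m) (k : ℕ) : pos m + 2 * k ≤ pos (m + k) := by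
  induction k with
  | zero => rfl
  | succ k ih =>
    have := two_le_length_digits_ten (m := m + k + 1) (by omega)
    rw [← add_assoc, pos_succ]
    omega

noncomputable def champernowneTerm (n : ℕ) : ℝ := ((n + 1 : ℕ) : ℝ) / 10 ^ pos (n + 1)

theorem champernowneTerm_nonneg (n : ℕ) : 0 ≤ champernowneTerm n := by
  unfold champernowneTerm; positivity

theorem champernowneTerm_le (n : ℕ) : champernowneTerm n ≤ 10⁻¹ ^ pos n := by
  have hlen : ((n + 1 : ℕ) : ℝ) ≤ 10 ^ (Nat.digits 10 (n + 1)).length := by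
    exact_mod_cast (Nat.lt_base_pow_length_digits (by norm_num)).le
  rw [champernowneTerm, pos_succ, pow_add, inv_pow, div_le_iff₀ (by positivity), inv_mul_eq_div,
    le_div_iff₀ (by positivity), mul_comm]
  exact mul_le_mul_of_nonneg_left hlen (by positivity)

theorem champernowneTerm_add_twelve_le (k : ℕ) :
    champernowneTerm (k + 12) ≤ 10⁻¹ ^ 15 * 100⁻¹ ^ k := by
  have hpos : 15 + 2 * k ≤ pos (k + 12) := by
    rw [add_comm k]; exact pos_add_two_mul_le (m := 12) (by norm_num) k
  calc champernowneTerm (k + 12) ≤ 10⁻¹ ^ pos (k + 12) := champernowneTerm_le _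
    _ ≤ 10⁻¹ ^ (15 + 2 * k) := pow_le_pow_of_le_one (by norm_num) (by norm_num) hpos
    _ = 10⁻¹ ^ 15 * 100⁻¹ ^ k := by rw [pow_add, pow_mul]; norm_num

theorem summable_champernowneTerm_add_twelve :
    Summable fun k ↦ champernowneTerm (k + 12) :=
  .of_nonneg_of_le (fun _ ↦ champernowneTerm_nonneg _) champernowneTerm_add_twelve_le
    ((summable_geometric_of_lt_one (by norm_num) (by norm_num)).mul_left _)

theorem sum_range_twelve_champernowneTerm :
    ∑ i ∈ Finset.range 12, champernowneTerm i = 123456789101112 / 10 ^ 15 := by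
  norm_num [Finset.sum_range_succ, champernowneTerm, pos_succ, pos_zero]

theorem tsum_champernowneTerm_add_twelve_le :
    ∑' k, champernowneTerm (k + 12) ≤ 2 / 10 ^ 15 := by
  calc ∑' k, champernowneTerm (k + 12) ≤ ∑' k : ℕ, (10⁻¹ ^ 15 * 100⁻¹ ^ k : ℝ) :=
        summable_champernowneTerm_add_twelve.tsum_le_tsum champernowneTerm_add_twelve_le
          ((summable_geometric_of_lt_one (by norm_num) (by norm_num)).mul_left _)
    _ ≤ 2 / 10 ^ 15 := by
        rw [tsum_mul_left, tsum_geometric_of_lt_one (by norm_num) (by norm_num)]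
        norm_num

theorem C₁₀_mem_Icc : C₁₀ ∈ Set.Icc (123456789101112 / 10 ^ 15) (123456789101114 / 10 ^ 15) := by
  have hsplit : C₁₀ = ∑ i ∈ Finset.range 12, champernowneTerm i + ∑' k, champernowneTerm (k + 12) :=
    ((summable_nat_add_iff 12).1 summable_champernowneTerm_add_twelve).sum_add_tsum_nat_add 12
      |>.symm
  have htail : 0 ≤ ∑' k, champernowneTerm (k + 12) := tsum_nonneg fun k ↦ champernowneTerm_nonneg (k + 12)
  rw [hsplit, sum_range_twelve_champernowneTerm]
  constructor <;> linarith [tsum_champernowneTerm_add_twelve_le]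

end Champernowne

open GenContFract in
theorem convergent_before_hwm4 :
    (GenContFract.of C₁₀).nums 3 = 10 ∧ (GenContFract.of C₁₀).dens 3 = 81 ∧
    (10 : ℝ) ^ (-9 : ℤ) < 10 / 81 - C₁₀ ∧ 10 / 81 - C₁₀ < 11 * (10 : ℝ) ^ (-10 : ℤ) := by
  obtain ⟨hlo, hhi⟩ := C₁₀_mem_Icc
  obtain ⟨hh, h₀, h₁, h₂⟩ := of_s_of_mem_Ioo (x := C₁₀) ⟨by linarith, by linarith⟩
  refine ⟨?_, ?_, ?_, ?_⟩
  · rw [nums_three_eq h₀ h₁ h₂, hh]; norm_num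
  · rw [dens_three_eq h₀ h₁ h₂]; norm_num
  · rw [zpow_neg, zpow_ofNat]; linarith
  · rw [zpow_neg, zpow_ofNat]; linarith
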